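/- Let α = [0;2,\overline{r}] with r ≥ 1, let σ be the standard morphism σ(a) = s₁, σ(b) = s₁^{r−1}s₀ which generates c_α, and let (qₙ) be the denominators of the convergents of α. For all k, m ∈ ℕ with k = q_{m+1} − p where 2 ≤ p ≤ q_{m+1} − q_m + 1, the k-th right conjugate of σ^m satisfies (σ^m)_k(c_α) = ∏_{j=m−1}^{∞} (σ^{j+1})_{q_{m+1}−q_m−p}(b), where by convention (σ^{j+1})_{−1}(b) denotes the adjoining singular word v_j. -/

import Mathlib

/-- The two-letter alphabet 𝒜 = {a, b}. -/
inductive AB : Type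
  | a : AB
  | b : AB
deriving DecidableEq, Repr

/-- Apply a morphism (determined by its images on the letters) to a finite word. -/
def applyM (g : AB → List AB) (w : List AB) : List AB := w.flatMap g

/-- The exchange morphism E : a ↦ b, b ↦ a. -/
def Em : AB → List AB
  | AB.a => [AB.b]
  | AB.b => [AB.a]

/-- The morphism φ : a ↦ ab, b ↦ a. -/
def phim : AB → List AB
  | AB.a => [AB.a, AB.b]
  | AB.b => [AB.a]

/-- Composition of morphisms: `compM g h` applies `h` first, then `g`. -/
def compM (g h : AB → List AB) : AB → List AB := fun c => applyM g (h c)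

/-- Powers of a morphism. -/
def mpow (g : AB → List AB) : ℕ → AB → List AB
  | 0 => fun c => [c]
  | n + 1 => compM g (mpow g n)

/-- A morphism is standard iff it is a composition of E and φ (in any number and order). -/
inductive IsStandard : (AB → List AB) → Prop
  | id : IsStandard (fun c => [c])
  | compE {ψ : AB → List AB} : IsStandard ψ → IsStandard (compM ψ Em)
  | compPhi {ψ : AB → List AB} : IsStandard ψ → IsStandard (compM ψ phim)

/-- `IsRightConj ψ ξ k` : ξ is the k-th right conjugate of ψ, i.e. there is a word u
of length k with ψ(w)u = uξ(w) for all finite words w. -/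
def IsRightConj (ψ ξ : AB → List AB) (k : ℕ) : Prop :=
  ∃ u : List AB, u.length = k ∧ ∀ w : List AB, applyM ψ w ++ u = u ++ applyM ξ w

/-- w^k (power of a finite word under concatenation). -/
def lpow (w : List AB) : ℕ → List AB
  | 0 => []
  | k + 1 => w ++ lpow w k

/-- Standard sequence associated with a directive sequence (d₁, d₂, …) (here `d`
is indexed so that `d i` is dᵢ for i ≥ 1): `sseq d 0 = s₋₁ = b`, `sseq d (n+1) = sₙ`,
with s₀ = a and sₙ = sₙ₋₁^{dₙ} sₙ₋₂. -/
def sseq (d : ℕ → ℕ) : ℕ → List AB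
  | 0 => [AB.b]
  | 1 => [AB.a]
  | n + 2 => lpow (sseq d (n + 1)) (d (n + 1)) ++ sseq d n

/-- Convergent denominators: `qseq d n` = qₙ = |sₙ| (q₀ = 1, q₁ = 1 + d₁,
qₙ = dₙqₙ₋₁ + qₙ₋₂). -/
def qseq (d : ℕ → ℕ) : ℕ → ℕ
  | 0 => 1
  | 1 => 1 + d 1
  | n + 2 => d (n + 2) * qseq d (n + 1) + qseq d n

/-- `PrefInf u x` : the finite word u is a prefix of the infinite word x. -/
def PrefInf (u : List AB) (x : ℕ → AB) : Prop :=
  ∀ i, i < u.length → u.getD i AB.a = x i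

/-- Image of an infinite word under a (non-erasing) morphism, letter by letter. -/
def applyInf (g : AB → List AB) (x : ℕ → AB) : ℕ → AB :=
  fun i => (applyM g ((List.range (i + 1)).map x)).getD i AB.a

/-- `IsProdInf u x` : the infinite word x is the infinite product u 0 · u 1 · u 2 ⋯,
i.e. every finite partial product is a prefix of x. -/
def IsProdInf (u : ℕ → List AB) (x : ℕ → AB) : Prop :=
  ∀ n, PrefInf (((List.range n).map u).flatten) x

/-- Adjoining singular words: `vword d k` is the adjoining singular word v_{k-1}
(so `vword d 0 = v₋₁`), where vₙ = a·sₙ₊₁^{d_{n+2}−1}sₙ·b⁻¹ for n odd and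
vₙ = b·sₙ₊₁^{d_{n+2}−1}sₙ·a⁻¹ for n even. -/
def vword (d : ℕ → ℕ) (k : ℕ) : List AB :=
  (if k % 2 = 0 then AB.a else AB.b) ::
    (lpow (sseq d (k + 1)) (d (k + 1) - 1) ++ sseq d k).dropLast

/-- Singular words: `wword d k` is the singular word w_{k-2}
(w₋₂ = ε, w₋₁ = a, w₀ = b, and wₙ = a·sₙ·b⁻¹ for n ≥ 1 odd, wₙ = b·sₙ·a⁻¹ for n even). -/
def wword (d : ℕ → ℕ) : ℕ → List AB
  | 0 => []
  | 1 => [AB.a]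
  | 2 => [AB.b]
  | k + 3 =>
      (if (k + 1) % 2 = 1 then AB.a else AB.b) :: (sseq d (k + 2)).dropLast

/-- The standard morphism σ associated with a type (i) Sturm number
α = [0;1+d₁,\overline{d₂,…,dₙ}] : σ(a) = sₙ₋₁, σ(b) = sₙ₋₁^{dₙ−d₁} sₙ₋₂. -/
def sigmaGen (d : ℕ → ℕ) (n : ℕ) : AB → List AB
  | AB.a => sseq d n
  | AB.b => lpow (sseq d n) (d n - d 1) ++ sseq d (n - 1)

/-- The directive sequence of α = [0;2,\overline{r}] : d₁ = 1, dᵢ = r for i ≥ 2. -/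
def dseq (r : ℕ) : ℕ → ℕ := fun i => if i ≤ 1 then 1 else r

/-- The directive sequence of 1 − α = [0;1,d₁,\overline{d₂,…,dₙ}] obtained from that of
α = [0;1+d₁,\overline{d₂,…,dₙ}] : ê₁ = 0 and êᵢ = dᵢ₋₁ for i ≥ 2. -/
def dhat (d : ℕ → ℕ) : ℕ → ℕ := fun i => if i ≤ 1 then 0 else d (i - 1)

/-- `Generates ψ c x` : ψ is prolongable on the letter c and x = ψ^ω(c), i.e. every
ψ^m(c) is a prefix of x. -/
def Generates (ψ : AB → List AB) (c : AB) (x : ℕ → AB) : Prop :=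
  (∃ w : List AB, w ≠ [] ∧ ψ c = c :: w) ∧ ∀ m, PrefInf (mpow ψ m c) x

/-- Fibonacci numbers, shifted: `fibw k = F_{k-1}`, so fibw 0 = F₋₁ = 1,
fibw 1 = F₀ = 1, Fₙ = Fₙ₋₁ + Fₙ₋₂. -/
def fibw : ℕ → ℕ
  | 0 => 1
  | 1 => 1
  | n + 2 => fibw (n + 1) + fibw n

/-- `HasCF γ a` : γ has continued fraction expansion [0; a 1, a 2, a 3, …]. -/
def HasCF (γ : ℝ) (a : ℕ → ℕ) : Prop :=
  ∃ x : ℕ → ℝ, x 0 = γ ∧ (∀ i, 0 < x i ∧ x i < 1) ∧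
    ∀ i, 1 / x i = (a (i + 1) : ℝ) + x (i + 1)

/-- γ has a continued fraction expansion of type (i):
γ = [0;1+d₁,\overline{d₂,…,dₙ}] < 1/2 with dₙ ≥ d₁ ≥ 1. -/
def CFTypeI (γ : ℝ) : Prop :=
  ∃ a : ℕ → ℕ, HasCF γ a ∧ γ < 1 / 2 ∧
    ∃ n : ℕ, 2 ≤ n ∧ ∃ d : ℕ → ℕ,
      (∀ i, 1 ≤ i → 1 ≤ d i) ∧ a 1 = 1 + d 1 ∧ (∀ i, 2 ≤ i → a i = d i) ∧
      (∀ i, 2 ≤ i → d (i + (n - 1)) = d i) ∧ d 1 ≤ d n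

/-- γ has a continued fraction expansion of type (ii):
γ = [0;1,d₁,\overline{d₂,…,dₙ}] > 1/2 with dₙ ≥ d₁. -/
def CFTypeII (γ : ℝ) : Prop :=
  ∃ a : ℕ → ℕ, HasCF γ a ∧ 1 / 2 < γ ∧
    ∃ n : ℕ, 2 ≤ n ∧ ∃ d : ℕ → ℕ,
      (∀ i, 1 ≤ i → 1 ≤ d i) ∧ a 1 = 1 ∧ (∀ i, 2 ≤ i → a i = d (i - 1)) ∧
      (∀ i, 2 ≤ i → d (i + (n - 1)) = d i) ∧ d 1 ≤ d n

/-- A Sturm number: an irrational γ ∈ (0,1) whose continued fraction expansion is of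
type (i) or type (ii). -/
def IsSturmNumber (γ : ℝ) : Prop :=
  Irrational γ ∧ 0 < γ ∧ γ < 1 ∧ (CFTypeI γ ∨ CFTypeII γ)


/-!
If `σ^m(w) u = u ξ(w)` for all `w`, then, `c_α` being the fixed point of `σ`, `u` is the
prefix of length `k` of `c_α` and `ξ(c_α)` is `c_α` shifted by `k`; so the claim is that this
prefix followed by the product is again a prefix of `c_α`. Both cases rest on the
factorisation `s_{m+n} = s_m σ^m(b) σ^{m+1}(b) ⋯ σ^{m+n-1}(b)`. For `k = q_m - 1` the product
of the `v_j` is this factorisation shifted by one letter, `v_j` being `σ^j(b)` with its last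
letter moved to the front. Otherwise all the conjugating words of the `σ^{m+t}` equal the
prefix `u'` of length `k - q_m`, which therefore commutes past the product, and it remains
that `s_n u'` is a prefix of `c_α`: this holds because `s_n s_{n+1}` and `s_{n+1} s_n` agree
except in their last two letters.
-/

open List

section Morphisms

variable (g h : AB → List AB)

@[simp] lemma applyM_nil : applyM g [] = [] := rfl

@[simp] lemma applyM_cons (x : AB) (w : List AB) : applyM g (x :: w) = g x ++ applyM g w := by
  simp [applyM]

@[simp] lemma applyM_append (u v : List AB) :
    applyM g (u ++ v) = applyM g u ++ applyM g v := by
  simp [applyM]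

@[simp] lemma applyM_singleton (x : AB) : applyM g [x] = g x := by simp [applyM]

lemma applyM_compM (w : List AB) : applyM (compM g h) w = applyM g (applyM h w) := by
  simp only [applyM, flatMap_assoc]
  rfl

@[simp] lemma applyM_mpow_zero (w : List AB) : applyM (mpow g 0) w = w := by
  simp [applyM, mpow]

lemma applyM_mpow_succ (n : ℕ) (w : List AB) :
    applyM (mpow g (n + 1)) w = applyM g (applyM (mpow g n) w) := by
  rw [mpow, applyM_compM]

lemma applyM_mpow_succ' (n : ℕ) (w : List AB) :
    applyM (mpow g (n + 1)) w = applyM (mpow g n) (applyM g w) := by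
  induction n generalizing w with
  | zero => simp [applyM_mpow_succ]
  | succ n ih => rw [applyM_mpow_succ, ih, ← applyM_mpow_succ]

lemma applyM_lpow (w : List AB) (k : ℕ) : applyM g (lpow w k) = lpow (applyM g w) k := by
  induction k with
  | zero => rfl
  | succ k ih => simp [lpow, ih]

lemma length_le_length_applyM (hg : ∀ x, g x ≠ []) (w : List AB) :
    w.length ≤ (applyM g w).length := by
  induction w with
  | nil => simp
  | cons x w ih =>
    have := length_pos_of_ne_nil (hg x)
    simp only [applyM_cons, length_cons, length_append]
    omega

end Morphisms

lemma length_lpow (w : List AB) (k : ℕ) : (lpow w k).length = k * w.length := by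
  induction k with
  | zero => simp [lpow]
  | succ k ih => simp [lpow, ih, Nat.succ_mul, Nat.add_comm]

lemma append_lpow_comm (w : List AB) (k : ℕ) : w ++ lpow w k = lpow w k ++ w := by
  induction k with
  | zero => simp [lpow]
  | succ k ih => rw [lpow, append_assoc, ih, ← append_assoc]

lemma prefix_of_append_eq_append {α : Type*} {a b u : List α} (h : a ++ u = u ++ b)
    (hu : u.length ≤ a.length) : u <+: a :=
  prefix_of_prefix_length_le (h ▸ prefix_append u b) (prefix_append a u) hu

lemma append_flatten_eq_flatten_append {α : Type*} {u : List α} {a b : ℕ → List α}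
    (h : ∀ t, a t ++ u = u ++ b t) (n : ℕ) :
    u ++ ((range n).map b).flatten = ((range n).map a).flatten ++ u := by
  induction n with
  | zero => simp
  | succ n ih =>
    simp only [range_succ, map_append, flatten_append, map_cons, map_nil, flatten_cons,
      flatten_nil, append_nil]
    rw [← append_assoc, ih, append_assoc, ← h n, append_assoc]

section InfiniteWords

def infPrefix (c : ℕ → AB) (n : ℕ) : List AB := (range n).map c

variable {c : ℕ → AB} {u w : List AB}

@[simp] lemma infPrefix_zero : infPrefix c 0 = [] := rfl

@[simp] lemma length_infPrefix (n : ℕ) : (infPrefix c n).length = n := by simp [infPrefix]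

lemma infPrefix_add (k n : ℕ) :
    infPrefix c (k + n) = infPrefix c k ++ infPrefix (fun i => c (k + i)) n := by
  simp [infPrefix, range_add]

lemma prefInf_iff_eq_infPrefix : PrefInf u c ↔ u = infPrefix c u.length := by
  constructor
  · intro hu
    refine ext_getElem (by simp) fun i h1 _ => ?_
    rw [← getD_eq_getElem u AB.a h1, hu i h1]
    simp [infPrefix]
  · intro hu i hi
    rw [hu, getD_eq_getElem _ _ (by simpa using hi)]
    simp [infPrefix]

lemma PrefInf.mono (h : u <+: w) (hw : PrefInf w c) : PrefInf u c := by
  obtain ⟨t, rfl⟩ := h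
  intro i hi
  rw [← getD_append u t AB.a i hi]
  exact hw i (by rw [length_append]; omega)

lemma PrefInf.infPrefix_prefix (hw : PrefInf w c) {n : ℕ} (hn : n ≤ w.length) :
    infPrefix c n <+: w := by
  rw [prefInf_iff_eq_infPrefix.mp hw, ← Nat.add_sub_cancel' hn, infPrefix_add]
  exact prefix_append _ _

lemma PrefInf.of_infPrefix_append {k : ℕ} (h : PrefInf (infPrefix c k ++ w) c) :
    PrefInf w (fun i => c (k + i)) := by
  rw [prefInf_iff_eq_infPrefix, length_append, length_infPrefix, infPrefix_add,
    append_right_inj] at h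
  exact prefInf_iff_eq_infPrefix.mpr h

end InfiniteWords

def MapsLongPrefixes (ψ : AB → List AB) (c : ℕ → AB) : Prop :=
  ∀ n, ∃ w, PrefInf w c ∧ n ≤ w.length ∧ PrefInf (applyM ψ w) c

section RightConjugate

variable {ψ ξ : AB → List AB} {u : List AB} {c : ℕ → AB}

/-- `u` is a prefix of the image under `ψ` of the rest of a long prefix of `c`. -/
lemma prefInf_applyM_infPrefix_append (hψ : ∀ x, ψ x ≠ [])
    (hconj : ∀ w, applyM ψ w ++ u = u ++ applyM ξ w)
    (hfix : MapsLongPrefixes ψ c) (n : ℕ) :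
    PrefInf (applyM ψ (infPrefix c n) ++ u) c := by
  obtain ⟨w, hw, hlen, hψw⟩ := hfix (n + u.length)
  obtain ⟨z, rfl⟩ := hw.infPrefix_prefix (n := n) (by omega)
  have hz : u.length ≤ (applyM ψ z).length := by
    have := length_le_length_applyM ψ hψ z
    simp only [length_append, length_infPrefix] at hlen
    omega
  have hu : u <+: applyM ψ z := prefix_of_append_eq_append (hconj z) hz
  rw [applyM_append] at hψw
  exact hψw.mono ((prefix_append_right_inj _).mpr hu)

lemma eq_infPrefix_of_conj (hψ : ∀ x, ψ x ≠ [])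
    (hconj : ∀ w, applyM ψ w ++ u = u ++ applyM ξ w)
    (hfix : MapsLongPrefixes ψ c) : u = infPrefix c u.length := by
  simpa [prefInf_iff_eq_infPrefix] using prefInf_applyM_infPrefix_append hψ hconj hfix 0

lemma applyInf_eq_shift_of_conj (hψ : ∀ x, ψ x ≠ [])
    (hconj : ∀ w, applyM ψ w ++ u = u ++ applyM ξ w)
    (hfix : MapsLongPrefixes ψ c) :
    applyInf ξ c = fun i => c (u.length + i) := by
  funext i
  have hpref := prefInf_applyM_infPrefix_append hψ hconj hfix (i + 1)
  have hlen := length_le_length_applyM ψ hψ (infPrefix c (i + 1))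
  rw [length_infPrefix] at hlen
  calc applyInf ξ c i = (u ++ applyM ξ (infPrefix c (i + 1))).getD (u.length + i) AB.a := by
        rw [getD_append_right _ _ _ _ (by omega), Nat.add_sub_cancel_left]; rfl
    _ = c (u.length + i) := by
        rw [← hconj]
        exact hpref _ (by rw [length_append]; omega)

end RightConjugate

section StandardSequence

variable (d : ℕ → ℕ)

lemma sseq_add_two (n : ℕ) :
    sseq d (n + 2) = lpow (sseq d (n + 1)) (d (n + 1)) ++ sseq d n := rfl

lemma length_sseq_succ : ∀ n, (sseq d (n + 1)).length = qseq d n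
  | 0 => rfl
  | 1 => by simp [length_lpow, qseq, sseq, Nat.add_comm]
  | n + 2 => by
    rw [sseq_add_two, length_append, length_lpow, length_sseq_succ (n + 1), length_sseq_succ n]
    rfl

lemma one_le_qseq : ∀ n, 1 ≤ qseq d n
  | 0 => le_rfl
  | 1 => Nat.le_add_right 1 _
  | n + 2 => (one_le_qseq n).trans (Nat.le_add_left _ _)

lemma sseq_append_sseq_swap : ∀ n, ∃ w x y,
    sseq d (n + 1) ++ sseq d n = w ++ [x, y] ∧ sseq d n ++ sseq d (n + 1) = w ++ [y, x]
  | 0 => ⟨[], AB.a, AB.b, rfl, rfl⟩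
  | n + 1 => by
    obtain ⟨w, x, y, h1, h2⟩ := sseq_append_sseq_swap n
    refine ⟨lpow (sseq d (n + 1)) (d (n + 1)) ++ w, y, x, ?_, ?_⟩
    · rw [sseq_add_two, append_assoc, h2, ← append_assoc]
    · rw [sseq_add_two, ← append_assoc, append_lpow_comm, append_assoc, h1, ← append_assoc]

end StandardSequence

section Sigma

variable {r : ℕ}

local notation "σ" => sigmaGen (dseq r) 2

lemma dseq_add_two (n : ℕ) : dseq r (n + 2) = r := by simp [dseq]

lemma sseq_dseq_two : sseq (dseq r) 2 = [AB.a, AB.b] := rfl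

lemma sigma_a : σ AB.a = [AB.a, AB.b] := rfl

lemma sigma_b : σ AB.b = lpow [AB.a, AB.b] (r - 1) ++ [AB.a] := by
  simp [sigmaGen, dseq, sseq_dseq_two]
  rfl

lemma applyM_sigma_sseq (hr : 1 ≤ r) :
    ∀ n, applyM σ (sseq (dseq r) (n + 1)) = sseq (dseq r) (n + 2)
  | 0 => rfl
  | 1 => by
    obtain ⟨s, rfl⟩ : ∃ s, r = s + 1 := ⟨r - 1, by omega⟩
    rw [sseq_dseq_two, sseq_add_two _ 1, dseq_add_two, sseq_dseq_two]
    simp [sigma_a, sigma_b, lpow, sseq]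
  | n + 2 => by
    rw [sseq_add_two _ (n + 1), applyM_append, applyM_lpow, applyM_sigma_sseq hr (n + 1),
      applyM_sigma_sseq hr n, sseq_add_two _ (n + 2), dseq_add_two, dseq_add_two]

lemma applyM_mpow_sigma_sseq (hr : 1 ≤ r) (M : ℕ) :
    ∀ n, applyM (mpow σ M) (sseq (dseq r) (n + 1)) = sseq (dseq r) (n + 1 + M) := by
  induction M with
  | zero => simp
  | succ M ih =>
    intro n
    rw [applyM_mpow_succ', applyM_sigma_sseq hr, ih (n + 1)]
    congr 1
    omega

lemma mpow_sigma_a (hr : 1 ≤ r) (κ : ℕ) : mpow σ κ AB.a = sseq (dseq r) (κ + 1) := by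
  rw [← applyM_singleton (mpow σ κ), show [AB.a] = sseq (dseq r) (0 + 1) from rfl,
    applyM_mpow_sigma_sseq hr, Nat.add_comm]

lemma mpow_sigma_succ_a (κ : ℕ) :
    mpow σ (κ + 1) AB.a = mpow σ κ AB.a ++ mpow σ κ AB.b := by
  rw [← applyM_singleton (mpow σ (κ + 1)), applyM_mpow_succ', applyM_singleton, sigma_a]
  simp

lemma mpow_sigma_succ_b (κ : ℕ) :
    mpow σ (κ + 1) AB.b = applyM (mpow σ κ) (lpow [AB.a, AB.b] (r - 1)) ++ mpow σ κ AB.a := by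
  rw [← applyM_singleton (mpow σ (κ + 1)), applyM_mpow_succ', applyM_singleton, sigma_b]
  simp

lemma mpow_sigma_b (hr : 1 ≤ r) : ∀ κ,
    mpow σ κ AB.b = lpow (sseq (dseq r) (κ + 1)) (dseq r (κ + 1) - 1) ++ sseq (dseq r) κ
  | 0 => rfl
  | κ + 1 => by
    rw [mpow_sigma_succ_b, mpow_sigma_a hr, ← sseq_dseq_two (r := r), applyM_lpow,
      applyM_mpow_sigma_sseq hr, dseq_add_two, show 1 + 1 + κ = κ + 1 + 1 by omega]

def parityLetter (κ : ℕ) : AB := if κ % 2 = 0 then AB.a else AB.b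

lemma parityLetter_add_two (κ : ℕ) : parityLetter (κ + 2) = parityLetter κ := by
  simp [parityLetter]

lemma getLast?_mpow_sigma : ∀ κ,
    (mpow σ κ AB.a).getLast? = some (parityLetter κ) ∧
      (mpow σ κ AB.b).getLast? = some (parityLetter (κ + 1))
  | 0 => ⟨rfl, rfl⟩
  | κ + 1 => by
    obtain ⟨ha, hb⟩ := getLast?_mpow_sigma κ
    rw [mpow_sigma_succ_a, mpow_sigma_succ_b, getLast?_append, getLast?_append, ha, hb,
      parityLetter_add_two]
    exact ⟨rfl, rfl⟩

lemma mpow_sigma_ne_nil (κ : ℕ) (x : AB) : mpow σ κ x ≠ [] := by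
  obtain ⟨ha, hb⟩ := getLast?_mpow_sigma (r := r) κ
  cases x
  · exact ne_nil_of_mem (mem_of_getLast? ha)
  · exact ne_nil_of_mem (mem_of_getLast? hb)

lemma qseq_strictMono (hr : 1 ≤ r) : StrictMono (qseq (dseq r)) := by
  refine strictMono_nat_of_lt_succ fun n => ?_
  cases n with
  | zero => exact Nat.lt_succ_self 1
  | succ n =>
    have := one_le_qseq (dseq r) n
    show qseq (dseq r) (n + 1) < dseq r (n + 2) * qseq (dseq r) (n + 1) + qseq (dseq r) n
    rw [dseq_add_two]
    nlinarith

lemma sseq_prefix_sseq_succ (hr : 1 ≤ r) : ∀ n, sseq (dseq r) (n + 1) <+: sseq (dseq r) (n + 2)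
  | 0 => ⟨[AB.b], rfl⟩
  | n + 1 => by
    obtain ⟨s, rfl⟩ : ∃ s, r = s + 1 := ⟨r - 1, by omega⟩
    rw [sseq_add_two _ (n + 1), dseq_add_two, lpow, append_assoc]
    exact prefix_append _ _

lemma sseq_append_sseq_prefix (hr : 1 ≤ r) (n : ℕ) :
    sseq (dseq r) (n + 2) ++ sseq (dseq r) (n + 1) <+: sseq (dseq r) (n + 3) := by
  obtain ⟨s, rfl⟩ : ∃ s, r = s + 1 := ⟨r - 1, by omega⟩
  rw [sseq_add_two _ (n + 1), dseq_add_two, lpow, append_assoc]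
  refine (prefix_append_right_inj _).mpr ?_
  cases s with
  | zero => exact prefix_refl _
  | succ s =>
    rw [lpow, append_assoc]
    exact (sseq_prefix_sseq_succ hr n).trans (prefix_append _ _)

variable {c : ℕ → AB}

/-- Since `s_{n+1} s_n` is a prefix of `c`, so is `s_n s_{n+1}` up to its last two letters. -/
lemma prefInf_sseq_append_infPrefix (hr : 1 ≤ r) (hc : ∀ k, PrefInf (sseq (dseq r) (k + 1)) c)
    (n j : ℕ) (hj : j + 2 ≤ qseq (dseq r) (n + 1)) :
    PrefInf (sseq (dseq r) (n + 1) ++ infPrefix c j) c := by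
  obtain ⟨w, x, y, h1, h2⟩ := sseq_append_sseq_swap (dseq r) (n + 1)
  have hw : PrefInf w c :=
    (hc (n + 2)).mono (((prefix_append w [x, y]).trans (h1 ▸ prefix_refl _)).trans
      (sseq_append_sseq_prefix hr n))
  have hlen := congrArg length h1
  simp only [length_append, length_sseq_succ, length_cons, length_nil] at hlen
  have hj' : infPrefix c j <+: sseq (dseq r) (n + 2) :=
    (hc (n + 1)).infPrefix_prefix (by rw [length_sseq_succ]; omega)
  refine hw.mono (prefix_of_prefix_length_le (h2 ▸ (prefix_append_right_inj _).mpr hj')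
    (prefix_append _ _) ?_)
  rw [length_append, length_sseq_succ, length_infPrefix]
  omega

lemma sseq_eq_append_flatten (hr : 1 ≤ r) (m : ℕ) : ∀ n,
    sseq (dseq r) (m + n + 1) =
      sseq (dseq r) (m + 1) ++ ((range n).map fun t => mpow σ (m + t) AB.b).flatten
  | 0 => by simp
  | n + 1 => by
    rw [← mpow_sigma_a hr, ← Nat.add_assoc, mpow_sigma_succ_a, mpow_sigma_a hr,
      sseq_eq_append_flatten hr m n, range_succ]
    simp

lemma vword_eq (hr : 1 ≤ r) (κ : ℕ) :
    vword (dseq r) κ = parityLetter κ :: (mpow σ κ AB.b).dropLast := by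
  rw [mpow_sigma_b hr]
  rfl

lemma sseq_eq_dropLast_append_flatten_vword (hr : 1 ≤ r) (m : ℕ) : ∀ n,
    sseq (dseq r) (m + n + 1) = (sseq (dseq r) (m + 1)).dropLast ++
      ((range n).map fun t => vword (dseq r) (m + t)).flatten ++ [parityLetter (m + n)]
  | 0 => by
    rw [← mpow_sigma_a hr]
    simpa using (dropLast_append_getLast? _ (getLast?_mpow_sigma m).1).symm
  | n + 1 => by
    have hb := dropLast_append_getLast? _ (getLast?_mpow_sigma (r := r) (m + n)).2
    rw [← mpow_sigma_a hr, ← Nat.add_assoc, mpow_sigma_succ_a, mpow_sigma_a hr,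
      sseq_eq_dropLast_append_flatten_vword hr m n, range_succ]
    conv_lhs => rw [← hb]
    simp [vword_eq hr]

variable {c : ℕ → AB}

lemma prefInf_infPrefix_append_flatten_vword (hr : 1 ≤ r)
    (hc : ∀ k, PrefInf (sseq (dseq r) (k + 1)) c) (m n : ℕ) :
    PrefInf (infPrefix c (qseq (dseq r) m - 1) ++
      ((range n).map fun t => vword (dseq r) (m + t)).flatten) c := by
  have hdrop : (sseq (dseq r) (m + 1)).dropLast = infPrefix c (qseq (dseq r) m - 1) := by
    have h := prefInf_iff_eq_infPrefix.mp ((hc m).mono (dropLast_prefix _))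
    rwa [length_dropLast, length_sseq_succ] at h
  rw [← hdrop]
  exact (hc (m + n)).mono (sseq_eq_dropLast_append_flatten_vword hr m n ▸ prefix_append _ _)

lemma prefInf_infPrefix_append_flatten_conj (hr : 1 ≤ r)
    (hc : ∀ k, PrefInf (sseq (dseq r) (k + 1)) c) {m k : ℕ}
    (hk : k + 2 ≤ qseq (dseq r) (m + 1)) {ξs : ℕ → AB → List AB}
    (hξs : ∀ t, mpow σ (m + t) AB.b ++ infPrefix c k = infPrefix c k ++ applyM (ξs t) [AB.b])
    (n : ℕ) :
    PrefInf (infPrefix c (qseq (dseq r) m + k) ++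
      ((range n).map fun t => applyM (ξs t) [AB.b]).flatten) c := by
  have hstart : infPrefix c (qseq (dseq r) m + k) = sseq (dseq r) (m + 1) ++ infPrefix c k := by
    have h := prefInf_sseq_append_infPrefix hr hc m k hk
    rw [prefInf_iff_eq_infPrefix, length_append, length_sseq_succ, length_infPrefix] at h
    exact h.symm
  have hmono := (qseq_strictMono hr).monotone (show m + 1 ≤ m + n + 1 by omega)
  rw [hstart, append_assoc, append_flatten_eq_flatten_append hξs, ← append_assoc,
    ← sseq_eq_append_flatten hr]
  exact prefInf_sseq_append_infPrefix hr hc (m + n) k (by omega)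

lemma mapsLongPrefixes_mpow_sigma (hr : 1 ≤ r) (hc : ∀ k, PrefInf (sseq (dseq r) (k + 1)) c)
    (M : ℕ) : MapsLongPrefixes (mpow σ M) c := fun n =>
  ⟨sseq (dseq r) (n + 1), hc n, by rw [length_sseq_succ]; exact (qseq_strictMono hr).id_le n,
    by rw [applyM_mpow_sigma_sseq hr, Nat.add_right_comm]; exact hc (n + M)⟩

end Sigma

/-- For α = [0;2,\overline{r}] (r ≥ 1) with σ(a) = s₁, σ(b) = s₁^{r−1}s₀
generating c_α: if k = q_{m+1} − p with 2 ≤ p ≤ q_{m+1} − q_m + 1, then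
(σ^m)_k(c_α) = ∏_{j=m−1}^∞ (σ^{j+1})_{q_{m+1}−q_m−p}(b), where (σ^{j+1})_{−1}(b) := v_j.
(Term t of the product corresponds to j = m − 1 + t, and v_j = `vword (dseq r) (m+t)`.) -/
theorem statement0 (r : ℕ) (hr : 1 ≤ r)
    (c : ℕ → AB) (hc : ∀ k, PrefInf (sseq (dseq r) (k + 1)) c)
    (k m p : ℕ) (hp2 : 2 ≤ p)
    (hp : p ≤ qseq (dseq r) (m + 1) - qseq (dseq r) m + 1)
    (hk : k = qseq (dseq r) (m + 1) - p)
    (ξ : AB → List AB) (hξ : IsRightConj (mpow (sigmaGen (dseq r) 2) m) ξ k)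
    (ξs : ℕ → AB → List AB)
    (hξs : p ≤ qseq (dseq r) (m + 1) - qseq (dseq r) m →
      ∀ t, IsRightConj (mpow (sigmaGen (dseq r) 2) (m + t)) (ξs t)
        (qseq (dseq r) (m + 1) - qseq (dseq r) m - p)) :
    IsProdInf
      (fun t =>
        if p = qseq (dseq r) (m + 1) - qseq (dseq r) m + 1 then
          vword (dseq r) (m + t)
        else applyM (ξs t) [AB.b])
      (applyInf ξ c) := by
  obtain ⟨u, hu, hconj⟩ := hξ
  have hfix := mapsLongPrefixes_mpow_sigma hr hc
  rw [applyInf_eq_shift_of_conj (mpow_sigma_ne_nil m) hconj (hfix m), hu]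
  intro n
  apply PrefInf.of_infPrefix_append
  have hq := qseq_strictMono hr (Nat.lt_add_one m)
  have hq1 := one_le_qseq (dseq r) m
  by_cases hsing : p = qseq (dseq r) (m + 1) - qseq (dseq r) m + 1
  · simp only [if_pos hsing]
    rw [show k = qseq (dseq r) m - 1 by omega]
    exact prefInf_infPrefix_append_flatten_vword hr hc m n
  · simp only [if_neg hsing]
    have hgen : p ≤ qseq (dseq r) (m + 1) - qseq (dseq r) m := by omega
    rw [show k = qseq (dseq r) m + (qseq (dseq r) (m + 1) - qseq (dseq r) m - p) by omega]
    refine prefInf_infPrefix_append_flatten_conj hr hc (by omega) (fun t => ?_) n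
    obtain ⟨ut, hut, hconjt⟩ := hξs hgen t
    rw [← hut, ← applyM_singleton (mpow _ _),
      ← eq_infPrefix_of_conj (mpow_sigma_ne_nil _) hconjt (hfix _)]
    exact hconjt [AB.b]
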